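/- arXiv:2509.04668 — 4 statements merged into one kernel-verified Lean document; each statement's English description precedes it below -/
import Mathlib

section
/- Let H be a real Hilbert space (or ℝ^d), C > 0, and k ≥ 2 a real number. Let z be a Bochner-integrable H-valued random vector with mean E[z] = ν and E[‖z‖^k] ≤ r^{(k)} < ∞. Then the clipped vector Π_C(z) satisfies ‖ E[Π_C(z)] − ν ‖ ≤ r^{(k)} / ((k−1)·C^{k−1}). -/
/-!
Clipping moves `z` by exactly `(‖z‖ - C)⁺`, and Bernoulli's inequality applied to `x / C` gives
`(k - 1) C^(k-1) (x - C) ≤ x^k` for all `x ≥ 0`. Since the bias is the mean of `clip C z - z`,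
it is at most `E ‖z‖^k / ((k - 1) C^(k-1))`.
-/

open MeasureTheory

/-- Projection onto the closed ball of radius `C` centered at the origin. -/
noncomputable def clip {H : Type*} [NormedAddCommGroup H] [NormedSpace ℝ H]
    (C : ℝ) (z : H) : H :=
  if ‖z‖ ≤ C then z else (C / ‖z‖) • z

theorem sub_mul_rpow_le_rpow {x C k : ℝ} (hx : 0 ≤ x) (hC : 0 < C) (hk : 1 ≤ k) :
    (k - 1) * C ^ (k - 1) * (x - C) ≤ x ^ k := by
  have hCk : C ^ k = C ^ (k - 1) * C := by
    rw [← Real.rpow_add_one hC.ne']; ring_nf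
  have hxC : 0 ≤ x / C := div_nonneg hx hC.le
  have bernoulli : 1 + k * (x / C - 1) ≤ (x / C) ^ k := by
    simpa using one_add_mul_self_le_rpow_one_add (s := x / C - 1) (by linarith) hk
  calc (k - 1) * C ^ (k - 1) * (x - C) = C ^ k * ((k - 1) * (x / C - 1)) := by
        rw [hCk]; field_simp
    _ ≤ C ^ k * (1 + k * (x / C - 1)) := by gcongr; linarith
    _ ≤ C ^ k * (x / C) ^ k := by gcongr
    _ = x ^ k := by rw [Real.div_rpow hx hC.le]; field_simp

section Clip

variable {H : Type*} [NormedAddCommGroup H] [NormedSpace ℝ H]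

theorem norm_clip_le {C : ℝ} (hC : 0 ≤ C) (z : H) : ‖clip C z‖ ≤ ‖z‖ := by
  unfold clip
  split_ifs with h
  · rfl
  · have hz : 0 < ‖z‖ := hC.trans_lt (not_le.mp h)
    rw [norm_smul, Real.norm_of_nonneg (by positivity), div_mul_cancel₀ _ hz.ne']
    exact (not_le.mp h).le

theorem norm_clip_sub_self {C : ℝ} (hC : 0 ≤ C) (z : H) :
    ‖clip C z - z‖ = max (‖z‖ - C) 0 := by
  unfold clip
  split_ifs with h
  · simp [h]
  · have hz : 0 < ‖z‖ := hC.trans_lt (not_le.mp h)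
    have hle : C / ‖z‖ ≤ 1 := (div_le_one hz).mpr (not_le.mp h).le
    rw [show (C / ‖z‖) • z - z = (C / ‖z‖ - 1) • z by rw [sub_smul, one_smul], norm_smul,
      Real.norm_of_nonpos (by linarith), max_eq_left (by linarith)]
    field_simp
    ring

theorem continuous_clip {C : ℝ} (hC : 0 < C) : Continuous (clip (H := H) C) := by
  refine continuous_if_le continuous_norm continuous_const continuousOn_id
    ((continuousOn_const.div continuous_norm.continuousOn fun z hz => ?_).smul continuousOn_id)
    fun z hz => ?_
  · exact (hC.trans_le hz).ne'
  · rw [hz, div_self hC.ne', one_smul]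

theorem norm_clip_sub_self_le {C k : ℝ} (hC : 0 < C) (hk : 1 < k) (z : H) :
    ‖clip C z - z‖ ≤ ‖z‖ ^ k / ((k - 1) * C ^ (k - 1)) := by
  have hD : 0 < (k - 1) * C ^ (k - 1) := mul_pos (sub_pos.mpr hk) (Real.rpow_pos_of_pos hC _)
  rw [norm_clip_sub_self hC.le, le_div_iff₀ hD, max_mul_of_nonneg _ _ hD.le, mul_comm]
  exact max_le (sub_mul_rpow_le_rpow (norm_nonneg z) hC hk.le) (by rw [zero_mul]; positivity)

variable {Ω : Type*} [MeasurableSpace Ω] {μ : Measure Ω} {z : Ω → H}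

theorem MeasureTheory.Integrable.clip {C : ℝ} (hC : 0 < C) (hz : Integrable z μ) :
    Integrable (fun ω => clip C (z ω)) μ :=
  hz.norm.mono' ((continuous_clip hC).comp_aestronglyMeasurable hz.1)
    (.of_forall fun ω => norm_clip_le hC.le (z ω))

theorem norm_integral_clip_sub_integral_le {C k : ℝ} (hC : 0 < C) (hk : 1 < k)
    (hz : Integrable z μ) (hmom : Integrable (fun ω => ‖z ω‖ ^ k) μ) :
    ‖∫ ω, clip C (z ω) ∂μ - ∫ ω, z ω ∂μ‖ ≤ (∫ ω, ‖z ω‖ ^ k ∂μ) / ((k - 1) * C ^ (k - 1)) := by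
  rw [← integral_sub (hz.clip hC) hz, ← integral_div]
  calc ‖∫ ω, (clip C (z ω) - z ω) ∂μ‖ ≤ ∫ ω, ‖clip C (z ω) - z ω‖ ∂μ :=
        norm_integral_le_integral_norm _
    _ ≤ ∫ ω, ‖z ω‖ ^ k / ((k - 1) * C ^ (k - 1)) ∂μ :=
        integral_mono ((hz.clip hC).sub hz).norm (hmom.div_const _)
          fun ω => norm_clip_sub_self_le hC hk (z ω)

end Clip

theorem clip_bias_bound_general {Ω : Type*} [MeasurableSpace Ω]
    (P : Measure Ω)
    {H : Type*} [NormedAddCommGroup H] [InnerProductSpace ℝ H]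
    (C : ℝ) (hC : 0 < C) (k : ℝ) (hk : 2 ≤ k)
    (z : Ω → H) (hz : Integrable z P)
    (ν : H) (hν : (∫ ω, z ω ∂P) = ν)
    (r : ℝ) (hmom : Integrable (fun ω => ‖z ω‖ ^ k) P)
    (hr : (∫ ω, ‖z ω‖ ^ k ∂P) ≤ r) :
    ‖(∫ ω, clip C (z ω) ∂P) - ν‖ ≤ r / ((k - 1) * C ^ (k - 1)) := by
  have hk₁ : 1 < k := by linarith
  rw [← hν]
  refine (norm_integral_clip_sub_integral_le hC hk₁ hz hmom).trans ?_
  gcongr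

/-- The bias of the clipped random vector is bounded by the k-th moment:
‖E[Π_C(z)] − ν‖ ≤ r^{(k)} / ((k−1)·C^{k−1}) when E[z] = ν and E[‖z‖^k] ≤ r^{(k)}. -/
theorem clip_bias_bound {Ω : Type*} [MeasurableSpace Ω]
    (P : Measure Ω) [IsProbabilityMeasure P]
    {H : Type*} [NormedAddCommGroup H] [InnerProductSpace ℝ H] [CompleteSpace H]
    (C : ℝ) (hC : 0 < C) (k : ℝ) (hk : 2 ≤ k)
    (z : Ω → H) (hz : Integrable z P)
    (ν : H) (hν : (∫ ω, z ω ∂P) = ν)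
    (r : ℝ) (hmom : Integrable (fun ω => ‖z ω‖ ^ k) P)
    (hr : (∫ ω, ‖z ω‖ ^ k ∂P) ≤ r) :
    ‖(∫ ω, clip C (z ω) ∂P) - ν‖ ≤ r / ((k - 1) * C ^ (k - 1)) :=
  clip_bias_bound_general P C hC k hk z hz ν hν r hmom hr
end

section
/- Let θ > 1, let l ≥ 1 be an integer, and let Δ_1, …, Δ_l and E_1, …, E_l be positive real numbers such that for every i with 2 ≤ i ≤ l: Δ_i ≤ (Δ_{i−1}·E_i)^{1/θ} and E_i ≥ 2^{−θ}·E_{i−1}. Set K := 2^{θ/(θ−1)²}. Then Δ_l / ( K · E_l^{1/(θ−1)} ) ≤ ( Δ_1 / ( K · E_1^{1/(θ−1)} ) )^{1/θ^{l−1}}. -/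
/-!
Normalise by `K E^{1/(θ-1)}`: with `D_i = Δ_i / (K E_i^{1/(θ-1)})` one step of the recursion
gives `D_i ≤ D_{i-1}^{1/θ}`. In logarithms this is a linear inequality: the growth condition on
`E` costs a factor `2^{1/(θ-1)}`, and `K` is the constant with `K^{1-1/θ} = 2^{1/(θ-1)}`,
so it absorbs that factor exactly. Iterating the step `l - 1` times gives the bound.
-/

open Real

lemma le_rpow_pow_of_succ_le_rpow {u : ℕ → ℝ} {r : ℝ} (hr : 0 ≤ r) {n : ℕ}
    (hu : ∀ i < n, 0 ≤ u i) (hstep : ∀ i < n, u (i + 1) ≤ u i ^ r) :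
    u n ≤ u 0 ^ (r ^ n) := by
  induction n with
  | zero => simp
  | succ n ih =>
    calc u (n + 1) ≤ u n ^ r := hstep n n.lt_succ_self
      _ ≤ (u 0 ^ r ^ n) ^ r :=
        rpow_le_rpow (hu n n.lt_succ_self)
          (ih (fun i hi => hu i (by omega)) (fun i hi => hstep i (by omega))) hr
      _ = u 0 ^ r ^ (n + 1) := by rw [← rpow_mul (hu 0 (by omega)), pow_succ]

noncomputable def phasePotential (θ Δ E : ℝ) : ℝ :=
  Δ / (2 ^ (θ / (θ - 1) ^ 2) * E ^ (1 / (θ - 1)))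

section phasePotential

variable {θ Δ E : ℝ}

lemma phasePotential_pos (hΔ : 0 < Δ) (hE : 0 < E) : 0 < phasePotential θ Δ E := by
  unfold phasePotential
  positivity

lemma log_phasePotential (hΔ : 0 < Δ) (hE : 0 < E) :
    log (phasePotential θ Δ E) = log Δ - θ / (θ - 1) ^ 2 * log 2 - log E / (θ - 1) := by
  rw [phasePotential, log_div hΔ.ne' (by positivity), log_mul (by positivity) (by positivity),
    log_rpow two_pos, log_rpow hE]
  ring

lemma phasePotential_le_rpow (hθ : 1 < θ) {Δ' E' : ℝ} (hΔ : 0 < Δ) (hE : 0 < E)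
    (hΔ' : 0 < Δ') (hE' : 0 < E')
    (hrec : Δ' ≤ (Δ * E') ^ (1 / θ)) (hgrow : E' ≥ 2 ^ (-θ) * E) :
    phasePotential θ Δ' E' ≤ phasePotential θ Δ E ^ (1 / θ) := by
  have hθ0 : 0 < θ := by linarith
  have hθ1 : 0 < θ - 1 := by linarith
  have hrec_log : log Δ' ≤ (log Δ + log E') / θ := by
    have := log_le_log hΔ' hrec
    rwa [log_rpow (by positivity), log_mul hΔ.ne' hE'.ne', one_div_mul_eq_div] at this
  have hgrow_log : log E - θ * log 2 ≤ log E' := by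
    have := log_le_log (by positivity) hgrow
    rwa [log_mul (by positivity) hE.ne', log_rpow two_pos, neg_mul, ← sub_eq_neg_add] at this
  have hP : 0 < phasePotential θ Δ E := phasePotential_pos hΔ hE
  rw [← log_le_log_iff (phasePotential_pos hΔ' hE') (by positivity), log_rpow hP,
    log_phasePotential hΔ' hE', log_phasePotential hΔ hE]
  calc log Δ' - θ / (θ - 1) ^ 2 * log 2 - log E' / (θ - 1)
      ≤ (log Δ + log E') / θ - θ / (θ - 1) ^ 2 * log 2 - log E' / (θ - 1) := by linarith
    _ = log Δ / θ - θ / (θ - 1) ^ 2 * log 2 - log E' / (θ * (θ - 1)) := by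
      field_simp; ring
    _ ≤ log Δ / θ - θ / (θ - 1) ^ 2 * log 2 - (log E - θ * log 2) / (θ * (θ - 1)) := by
      gcongr
    _ = 1 / θ * (log Δ - θ / (θ - 1) ^ 2 * log 2 - log E / (θ - 1)) := by
      field_simp; ring

end phasePotential

/-- Iterated contraction bound for the phase recursion
Δ_i ≤ (Δ_{i−1}E_i)^{1/θ} with E_i ≥ 2^{−θ}E_{i−1}, where K = 2^{θ/(θ−1)²}. -/
theorem phase_contraction_iterated (θ : ℝ) (hθ : 1 < θ) (l : ℕ) (hl : 1 ≤ l)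
    (Δ E : ℕ → ℝ)
    (hΔpos : ∀ i, 1 ≤ i → i ≤ l → 0 < Δ i) (hEpos : ∀ i, 1 ≤ i → i ≤ l → 0 < E i)
    (hrec : ∀ i, 2 ≤ i → i ≤ l → Δ i ≤ (Δ (i - 1) * E i) ^ (1 / θ))
    (hEgrow : ∀ i, 2 ≤ i → i ≤ l → E i ≥ 2 ^ (-θ) * E (i - 1)) :
    Δ l / (2 ^ (θ / (θ - 1) ^ 2) * E l ^ (1 / (θ - 1)))
      ≤ (Δ 1 / (2 ^ (θ / (θ - 1) ^ 2) * E 1 ^ (1 / (θ - 1)))) ^ (1 / θ ^ (l - 1)) := by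
  obtain ⟨n, rfl⟩ : ∃ n, l = n + 1 := ⟨l - 1, by omega⟩
  have hstep : ∀ i < n, phasePotential θ (Δ (i + 2)) (E (i + 2))
      ≤ phasePotential θ (Δ (i + 1)) (E (i + 1)) ^ (1 / θ) := fun i hi =>
    phasePotential_le_rpow hθ (hΔpos _ (by omega) (by omega)) (hEpos _ (by omega) (by omega))
      (hΔpos _ (by omega) (by omega)) (hEpos _ (by omega) (by omega))
      (hrec (i + 2) (by omega) (by omega)) (hEgrow (i + 2) (by omega) (by omega))
  have hnonneg : ∀ i < n, 0 ≤ phasePotential θ (Δ (i + 1)) (E (i + 1)) := fun i hi =>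
    (phasePotential_pos (hΔpos _ (by omega) (by omega)) (hEpos _ (by omega) (by omega))).le
  rw [Nat.add_sub_cancel, ← one_div_pow]
  exact le_rpow_pow_of_succ_le_rpow (u := fun i => phasePotential θ (Δ (i + 1)) (E (i + 1)))
    (by positivity) hnonneg hstep
end

section
/- Let H be a real normed vector space, θ > 1, λ > 0, a > 0, R₀ > 0, and m ≥ 1 an integer. Let F : H → ℝ and w* ∈ H satisfy F(w) − F(w*) ≥ λ‖w − w*‖^θ for all w ∈ H. Define R_k := 2^{−k}R₀, μ₀ := 2R₀^{1−θ}a, and μ_k := 2^{(θ−1)k}μ₀. Let ŵ₀, ŵ₁, …, ŵ_m ∈ H with ‖ŵ₀ − w*‖ ≤ R₀, and assume that for every k with 1 ≤ k ≤ m: (i) if ‖ŵ_{k−1} − w*‖ ≤ R_{k−1} then F(ŵ_k) − F(w*) ≤ R_{k−1}·a; and (ii) F(ŵ_k) − F(ŵ_{k−1}) ≤ R_{k−1}·a. Let k* ∈ {1, …, m} satisfy μ_{k*} ≤ λ ≤ 2^{θ−1}μ_{k*}. Then: for every k with 1 ≤ k ≤ k*, ‖ŵ_{k−1} − w*‖ ≤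 R_{k−1} and F(ŵ_k) − F(w*) ≤ μ_k R_k^θ = 2^{−k}μ₀R₀^θ; moreover, for every k with k* ≤ k ≤ m, F(ŵ_k) − F(ŵ_{k*}) ≤ μ_{k*} R_{k*}^θ. -/
/-!
The choice of constants makes `μ_k R_k^θ = 2 R₀ a / 2^k = R_{k-1} a`, so the per-phase guarantee (i)
says exactly `F(ŵ_k) − F(w*) ≤ μ_k R_k^θ`. While `k ≤ k*` we have `μ_k ≤ μ_{k*} ≤ λ`, and the TNC then
forces `‖ŵ_k − w*‖ ≤ R_k`, which feeds (i) at the next phase. After phase `k*` the increments allowed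
by (ii) are `R₀ a / 2^{k−1}`, whose geometric sum from `k*` on is at most `2 R₀ a / 2^{k*}`.
-/

open Real

section Tsybakov

variable {H : Type*} [SeminormedAddCommGroup H] {F : H → ℝ} {wstar : H} {θ lam : ℝ}

theorem norm_sub_le_of_tnc (hθ : 0 < θ) (hlam : 0 < lam)
    (hTNC : ∀ w : H, F w - F wstar ≥ lam * ‖w - wstar‖ ^ θ) {w : H} {r : ℝ} (hr : 0 ≤ r)
    (hw : F w - F wstar ≤ lam * r ^ θ) : ‖w - wstar‖ ≤ r :=
  (rpow_le_rpow_iff (norm_nonneg _) hr hθ).1 <|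
    le_of_mul_le_mul_left ((hTNC w).trans hw) hlam

theorem norm_sub_le_of_tnc_of_forall_lt (hθ : 0 < θ) (hlam : 0 < lam)
    (hTNC : ∀ w : H, F w - F wstar ≥ lam * ‖w - wstar‖ ^ θ) {w : ℕ → H} {r : ℕ → ℝ} {K : ℕ}
    (hr : ∀ k, 0 ≤ r k) (h0 : ‖w 0 - wstar‖ ≤ r 0)
    (hstep : ∀ n < K, ‖w n - wstar‖ ≤ r n → F (w (n + 1)) - F wstar ≤ lam * r (n + 1) ^ θ) :
    ∀ k ≤ K, ‖w k - wstar‖ ≤ r k := by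
  intro k
  induction k with
  | zero => exact fun _ => h0
  | succ n ih =>
    intro hn
    exact norm_sub_le_of_tnc hθ hlam hTNC (hr _) (hstep n hn (ih (n.le_succ.trans hn)))

end Tsybakov

theorem sub_le_of_succ_sub_le_div_two_pow {u : ℕ → ℝ} {c : ℝ} (hc : 0 ≤ c) {k₀ k : ℕ}
    (hk : k₀ ≤ k) (hstep : ∀ j, k₀ ≤ j → j < k → u (j + 1) - u j ≤ c / 2 ^ j) :
    u k - u k₀ ≤ 2 * c / 2 ^ k₀ := by
  suffices u k - u k₀ ≤ 2 * c / 2 ^ k₀ - 2 * c / 2 ^ k by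
    linarith [show 0 ≤ 2 * c / 2 ^ k by positivity]
  induction k, hk using Nat.le_induction with
  | base => simp
  | succ n hn ih =>
    have hpow : (2 : ℝ) * c / 2 ^ n - 2 * c / 2 ^ (n + 1) = c / 2 ^ n := by
      field_simp
      ring
    linarith [ih fun j hj hjn => hstep j hj (hjn.trans n.lt_succ_self), hstep n hn n.lt_succ_self]

section Constants

variable {θ a R0 : ℝ}

theorem mu_mul_radius_rpow_eq (hR0 : 0 < R0) (k : ℕ) :
    2 * R0 ^ (1 - θ) * a * 2 ^ ((θ - 1) * (k : ℝ)) * (R0 / (2 : ℝ) ^ k) ^ θ =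
      2 * (R0 * a) / 2 ^ k := by
  have h2 : (0 : ℝ) < 2 := two_pos
  rw [div_rpow hR0.le (by positivity), ← rpow_natCast (2 : ℝ) k, ← rpow_mul h2.le,
    div_eq_mul_inv _ ((2 : ℝ) ^ ((k : ℝ) * θ)), ← rpow_neg h2.le]
  calc 2 * R0 ^ (1 - θ) * a * 2 ^ ((θ - 1) * (k : ℝ)) * (R0 ^ θ * 2 ^ (-((k : ℝ) * θ)))
      = 2 * a * (R0 ^ (1 - θ) * R0 ^ θ) * (2 ^ ((θ - 1) * (k : ℝ)) * 2 ^ (-((k : ℝ) * θ))) := by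
        ring
    _ = 2 * a * R0 ^ (1 : ℝ) * (2 : ℝ) ^ (-(k : ℝ)) := by
        rw [← rpow_add hR0, ← rpow_add h2]
        ring_nf
    _ = 2 * (R0 * a) / 2 ^ (k : ℝ) := by
        rw [rpow_one, rpow_neg h2.le]
        ring

theorem mu_mul_radius_rpow_succ_eq (hR0 : 0 < R0) (n : ℕ) :
    2 * R0 ^ (1 - θ) * a * 2 ^ ((θ - 1) * ((n + 1 : ℕ) : ℝ)) * (R0 / (2 : ℝ) ^ (n + 1)) ^ θ =
      R0 / 2 ^ n * a := by
  rw [mu_mul_radius_rpow_eq hR0, pow_succ]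
  field_simp
theorem mu_mul_radius_rpow_eq_two_rpow_neg_mul (hR0 : 0 < R0) (k : ℕ) :
    2 * R0 ^ (1 - θ) * a * 2 ^ ((θ - 1) * (k : ℝ)) * (R0 / (2 : ℝ) ^ k) ^ θ =
      2 ^ (-(k : ℝ)) * (2 * R0 ^ (1 - θ) * a) * R0 ^ θ := by
  rw [mu_mul_radius_rpow_eq hR0, rpow_neg two_pos.le, rpow_natCast]
  calc 2 * (R0 * a) / 2 ^ k = (2 ^ k)⁻¹ * (2 * a) * R0 ^ (1 - θ + θ) := by
        rw [sub_add_cancel, rpow_one]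
        ring
    _ = _ := by
        rw [rpow_add hR0]
        ring

theorem mu_le_mu_of_le (hθ : 1 ≤ θ) (hR0 : 0 ≤ R0) (ha : 0 ≤ a) {j k : ℕ} (hjk : j ≤ k) :
    2 * R0 ^ (1 - θ) * a * 2 ^ ((θ - 1) * (j : ℝ)) ≤
      2 * R0 ^ (1 - θ) * a * 2 ^ ((θ - 1) * (k : ℝ)) := by
  gcongr
  norm_num

end Constants

theorem localized_phases_induction_general {H : Type*} [NormedAddCommGroup H]
    (θ lam a R0 : ℝ) (hθ : 1 < θ) (hlam : 0 < lam) (ha : 0 < a) (hR0 : 0 < R0)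
    (m : ℕ)
    (F : H → ℝ) (wstar : H)
    (hTNC : ∀ w : H, F w - F wstar ≥ lam * ‖w - wstar‖ ^ θ)
    (what : ℕ → H) (h0 : ‖what 0 - wstar‖ ≤ R0)
    (hi : ∀ k, 1 ≤ k → k ≤ m → ‖what (k - 1) - wstar‖ ≤ R0 / (2 : ℝ) ^ (k - 1) →
      F (what k) - F wstar ≤ R0 / (2 : ℝ) ^ (k - 1) * a)
    (hii : ∀ k, 1 ≤ k → k ≤ m →
      F (what k) - F (what (k - 1)) ≤ R0 / (2 : ℝ) ^ (k - 1) * a)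
    (kstar : ℕ) (hkm : kstar ≤ m)
    (hkslo : 2 * R0 ^ (1 - θ) * a * 2 ^ ((θ - 1) * (kstar : ℝ)) ≤ lam) :
    (∀ k, 1 ≤ k → k ≤ kstar →
      ‖what (k - 1) - wstar‖ ≤ R0 / (2 : ℝ) ^ (k - 1) ∧
      F (what k) - F wstar ≤
        2 * R0 ^ (1 - θ) * a * 2 ^ ((θ - 1) * (k : ℝ)) * (R0 / (2 : ℝ) ^ k) ^ θ ∧
      2 * R0 ^ (1 - θ) * a * 2 ^ ((θ - 1) * (k : ℝ)) * (R0 / (2 : ℝ) ^ k) ^ θ =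
        2 ^ (-(k : ℝ)) * (2 * R0 ^ (1 - θ) * a) * R0 ^ θ) ∧
    (∀ k, kstar ≤ k → k ≤ m →
      F (what k) - F (what kstar) ≤
        2 * R0 ^ (1 - θ) * a * 2 ^ ((θ - 1) * (kstar : ℝ)) * (R0 / (2 : ℝ) ^ kstar) ^ θ) := by
  have hphase : ∀ n, n + 1 ≤ m → ‖what n - wstar‖ ≤ R0 / 2 ^ n →
      F (what (n + 1)) - F wstar ≤ R0 / 2 ^ n * a := fun n hn hloc =>
    hi (n + 1) (Nat.le_add_left 1 n) hn (by simpa using hloc)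
  have hloc : ∀ k ≤ kstar, ‖what k - wstar‖ ≤ R0 / 2 ^ k := by
    refine norm_sub_le_of_tnc_of_forall_lt (by linarith) hlam hTNC (fun k => by positivity)
      (by simpa using h0) fun n hn hloc => (hphase n (by omega) hloc).trans ?_
    rw [← mu_mul_radius_rpow_succ_eq hR0]
    gcongr
    exact (mu_le_mu_of_le hθ.le hR0.le ha.le hn).trans hkslo
  refine ⟨fun k hk hkk => ?_, fun k hk hkm' => ?_⟩
  · obtain ⟨n, rfl⟩ := Nat.exists_eq_add_of_le' hk
    rw [Nat.add_sub_cancel, mu_mul_radius_rpow_succ_eq hR0]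
    exact ⟨hloc n (by omega), hphase n (by omega) (hloc n (by omega)),
      (mu_mul_radius_rpow_succ_eq hR0 n).symm.trans (mu_mul_radius_rpow_eq_two_rpow_neg_mul hR0 _)⟩
  · rw [mu_mul_radius_rpow_eq hR0]
    refine sub_le_of_succ_sub_le_div_two_pow (u := fun j => F (what j))
      (mul_nonneg hR0.le ha.le) hk fun j _ hj => ?_
    simpa [div_mul_eq_mul_div] using hii (j + 1) (Nat.le_add_left 1 j) (by omega)

/-- Induction lemma for the localized multi-phase method under the
(θ, λ)-TNC, with R_k = 2^{−k}R₀, μ₀ = 2R₀^{1−θ}a and μ_k = 2^{(θ−1)k}μ₀: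
up to phase k* (where μ_{k*} ≤ λ ≤ 2^{θ−1}μ_{k*}) the iterates stay localized with
exponentially decreasing excess risk, and afterwards the excess risk relative to
ŵ_{k*} stays below μ_{k*}R_{k*}^θ. -/
theorem localized_phases_induction {H : Type*} [NormedAddCommGroup H] [NormedSpace ℝ H]
    (θ lam a R0 : ℝ) (hθ : 1 < θ) (hlam : 0 < lam) (ha : 0 < a) (hR0 : 0 < R0)
    (m : ℕ) (hm : 1 ≤ m)
    (F : H → ℝ) (wstar : H)
    (hTNC : ∀ w : H, F w - F wstar ≥ lam * ‖w - wstar‖ ^ θ)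
    (what : ℕ → H) (h0 : ‖what 0 - wstar‖ ≤ R0)
    (hi : ∀ k, 1 ≤ k → k ≤ m → ‖what (k - 1) - wstar‖ ≤ R0 / (2 : ℝ) ^ (k - 1) →
      F (what k) - F wstar ≤ R0 / (2 : ℝ) ^ (k - 1) * a)
    (hii : ∀ k, 1 ≤ k → k ≤ m →
      F (what k) - F (what (k - 1)) ≤ R0 / (2 : ℝ) ^ (k - 1) * a)
    (kstar : ℕ) (hk1 : 1 ≤ kstar) (hkm : kstar ≤ m)
    (hkslo : 2 * R0 ^ (1 - θ) * a * 2 ^ ((θ - 1) * (kstar : ℝ)) ≤ lam)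
    (hkshi : lam ≤ 2 ^ (θ - 1) * (2 * R0 ^ (1 - θ) * a * 2 ^ ((θ - 1) * (kstar : ℝ)))) :
    (∀ k, 1 ≤ k → k ≤ kstar →
      ‖what (k - 1) - wstar‖ ≤ R0 / (2 : ℝ) ^ (k - 1) ∧
      F (what k) - F wstar ≤
        2 * R0 ^ (1 - θ) * a * 2 ^ ((θ - 1) * (k : ℝ)) * (R0 / (2 : ℝ) ^ k) ^ θ ∧
      2 * R0 ^ (1 - θ) * a * 2 ^ ((θ - 1) * (k : ℝ)) * (R0 / (2 : ℝ) ^ k) ^ θ =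
        2 ^ (-(k : ℝ)) * (2 * R0 ^ (1 - θ) * a) * R0 ^ θ) ∧
    (∀ k, kstar ≤ k → k ≤ m →
      F (what k) - F (what kstar) ≤
        2 * R0 ^ (1 - θ) * a * 2 ^ ((θ - 1) * (kstar : ℝ)) * (R0 / (2 : ℝ) ^ kstar) ^ θ) :=
  localized_phases_induction_general θ lam a R0 hθ hlam ha hR0 m F wstar hTNC what h0 hi hii kstar
    hkm hkslo
end

section
/- Let H be a real normed vector space, θ > 1, λ > 0, a > 0, R₀ > 0, and m ≥ 1 an integer. Let F : H → ℝ and w* ∈ H satisfy F(w) − F(w*) ≥ λ‖w − w*‖^θ for all w ∈ H. Define R_k := 2^{−k}R₀. Let ŵ₀, ŵ₁, …, ŵ_m ∈ H with ‖ŵ₀ − w*‖ ≤ R₀, and assume that for every k with 1 ≤ k ≤ m: (i) if ‖ŵ_{k−1} − w*‖ ≤ R_{k−1} then F(ŵ_k) − F(w*) ≤ R_{k−1}·a; and (ii) F(ŵ_k) − F(ŵ_{k−1}) ≤ R_{k−1}·a. If additionally λ ≤ 2^{(θ−1)m+1}·R₀^{1−θ}·a, then F(ŵ_m) − F(w*)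 ≤ 4·(1/λ)^{1/(θ−1)}·(2a)^{θ/(θ−1)}. -/
/-!
Write `R_k = R₀ / 2^k`. As long as the target radius is large enough that `2a ≤ λ R_{k+1}^{θ-1}`,
the phase guarantee `F(ŵ_{k+1}) - F(w*) ≤ R_k a = 2 R_{k+1} a ≤ λ R_{k+1}^θ` and the TNC keep the
next iterate localized, `‖ŵ_{k+1} - w*‖ ≤ R_{k+1}`. Let `n` be the first phase whose target radius
`ρ = R_{n+1}` violates this; the extra hypothesis on `λ` says that `R_m` violates it, so `n < m`.
From phase `n` on, the increments of `F` are bounded by the geometric budgets `R_k a`, so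
`F(ŵ_m) - F(w*) ≤ 2 R_n a = 2ρ · 2a`, and `λ ρ^{θ-1} ≤ 2a` turns `ρ · 2a` into the rate
`λ^{-1/(θ-1)} (2a)^{θ/(θ-1)}`.
-/

open Real

theorem norm_sub_le_of_sub_le_mul_rpow {H : Type*} [SeminormedAddCommGroup H] {F : H → ℝ}
    {v wstar : H} {θ lam ρ : ℝ} (hθ : 0 < θ) (hlam : 0 < lam) (hρ : 0 ≤ ρ)
    (hTNC : F v - F wstar ≥ lam * ‖v - wstar‖ ^ θ) (h : F v - F wstar ≤ lam * ρ ^ θ) :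
    ‖v - wstar‖ ≤ ρ :=
  (rpow_le_rpow_iff (norm_nonneg _) hρ hθ).mp (le_of_mul_le_mul_left (hTNC.le.trans h) hlam)

theorem le_two_mul_sub_of_geometric_increments {e : ℕ → ℝ} {R0 a : ℝ} {j n : ℕ} (hjn : j < n)
    (hfirst : e (j + 1) ≤ R0 / 2 ^ j * a)
    (hstep : ∀ k, j < k → k < n → e (k + 1) ≤ e k + R0 / 2 ^ k * a) :
    e n ≤ 2 * (R0 / 2 ^ j - R0 / 2 ^ n) * a := by
  induction n, hjn using Nat.le_induction with
  | base => rw [pow_succ, div_mul_eq_div_div]; linarith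
  | succ n hjn ih =>
    have := hstep n hjn (by omega)
    rw [pow_succ, div_mul_eq_div_div]
    linarith [ih fun k hjk hkn => hstep k hjk (by omega)]

theorem norm_sub_le_div_two_pow_of_phases {H : Type*} [SeminormedAddCommGroup H] {F : H → ℝ} {wstar : H}
    {w : ℕ → H} {θ lam a R0 : ℝ} {m : ℕ} (hθ : 0 < θ) (hlam : 0 < lam) (hR0 : 0 < R0)
    (hTNC : ∀ v, F v - F wstar ≥ lam * ‖v - wstar‖ ^ θ) (h0 : ‖w 0 - wstar‖ ≤ R0)
    (hi : ∀ k < m, ‖w k - wstar‖ ≤ R0 / 2 ^ k → F (w (k + 1)) - F wstar ≤ R0 / 2 ^ k * a)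
    {n : ℕ} (hn : n ≤ m) (hlarge : ∀ k < n, 2 * a ≤ lam * (R0 / 2 ^ (k + 1)) ^ (θ - 1)) :
    ‖w n - wstar‖ ≤ R0 / 2 ^ n := by
  induction n with
  | zero => simpa using h0
  | succ n ih =>
    set ρ := R0 / 2 ^ (n + 1) with hρ_def
    have hρ : 0 < ρ := by positivity
    have hphase := hi n (by omega) (ih (by omega) fun k hk => hlarge k (by omega))
    refine norm_sub_le_of_sub_le_mul_rpow hθ hlam hρ.le (hTNC _) ?_
    calc F (w (n + 1)) - F wstar ≤ R0 / 2 ^ n * a := hphase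
      _ = ρ * (2 * a) := by rw [hρ_def, pow_succ]; field_simp
      _ ≤ ρ * (lam * ρ ^ (θ - 1)) := mul_le_mul_of_nonneg_left (hlarge n (by omega)) hρ.le
      _ = lam * ρ ^ θ := by rw [rpow_sub_one hρ.ne']; field_simp

theorem mul_rpow_div_two_pow_le {θ lam a R0 : ℝ} {m : ℕ} (hR0 : 0 < R0)
    (h : lam ≤ 2 ^ ((θ - 1) * (m : ℝ) + 1) * R0 ^ (1 - θ) * a) :
    lam * (R0 / 2 ^ m) ^ (θ - 1) ≤ 2 * a := by
  have hcancel : 2 ^ ((θ - 1) * (m : ℝ) + 1) * R0 ^ (1 - θ) * (R0 / 2 ^ m) ^ (θ - 1) = 2 := by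
    rw [div_rpow hR0.le (by positivity), ← rpow_natCast_mul (by norm_num), rpow_add (by norm_num),
      show 1 - θ = -(θ - 1) by ring, rpow_neg hR0.le]
    field_simp
    ring_nf
  calc lam * (R0 / 2 ^ m) ^ (θ - 1)
      ≤ 2 ^ ((θ - 1) * (m : ℝ) + 1) * R0 ^ (1 - θ) * a * (R0 / 2 ^ m) ^ (θ - 1) := by gcongr
    _ = 2 * a := by linear_combination a * hcancel

theorem mul_le_rpow_of_mul_rpow_le {θ lam b ρ : ℝ} (hθ : 1 < θ) (hlam : 0 < lam) (hb : 0 ≤ b)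
    (hρ : 0 ≤ ρ) (h : lam * ρ ^ (θ - 1) ≤ b) :
    ρ * b ≤ (1 / lam) ^ (1 / (θ - 1)) * b ^ (θ / (θ - 1)) := by
  have hθ1 : 0 < θ - 1 := by linarith
  have hρ_le : ρ ≤ (b / lam) ^ (1 / (θ - 1)) := by
    rw [one_div, le_rpow_inv_iff_of_pos hρ (by positivity) hθ1, le_div_iff₀ hlam]
    linarith
  have hexp : θ / (θ - 1) = 1 + 1 / (θ - 1) := by field_simp; ring
  calc ρ * b ≤ (b / lam) ^ (1 / (θ - 1)) * b := by gcongr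
    _ = (1 / lam) ^ (1 / (θ - 1)) * b ^ (θ / (θ - 1)) := by
      rw [hexp, rpow_one_add' hb (by positivity), div_eq_mul_one_div b lam,
        mul_rpow hb (by positivity)]
      ring

theorem localized_phases_rate_general {H : Type*} [NormedAddCommGroup H]
    (θ lam a R0 : ℝ) (hθ : 1 < θ) (hlam : 0 < lam) (ha : 0 < a) (hR0 : 0 < R0)
    (m : ℕ) (hm : 1 ≤ m)
    (F : H → ℝ) (wstar : H)
    (hTNC : ∀ w : H, F w - F wstar ≥ lam * ‖w - wstar‖ ^ θ)
    (what : ℕ → H) (h0 : ‖what 0 - wstar‖ ≤ R0)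
    (hi : ∀ k, 1 ≤ k → k ≤ m → ‖what (k - 1) - wstar‖ ≤ R0 / (2 : ℝ) ^ (k - 1) →
      F (what k) - F wstar ≤ R0 / (2 : ℝ) ^ (k - 1) * a)
    (hii : ∀ k, 1 ≤ k → k ≤ m →
      F (what k) - F (what (k - 1)) ≤ R0 / (2 : ℝ) ^ (k - 1) * a)
    (hextra : lam ≤ 2 ^ ((θ - 1) * (m : ℝ) + 1) * R0 ^ (1 - θ) * a) :
    F (what m) - F wstar ≤
      4 * (1 / lam) ^ (1 / (θ - 1)) * (2 * a) ^ (θ / (θ - 1)) := by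
  have hphase : ∀ k < m, ‖what k - wstar‖ ≤ R0 / 2 ^ k →
      F (what (k + 1)) - F wstar ≤ R0 / 2 ^ k * a :=
    fun k hk hloc => by simpa using hi (k + 1) (by omega) hk (by simpa using hloc)
  have hlast : lam * (R0 / 2 ^ (m - 1 + 1)) ^ (θ - 1) ≤ 2 * a := by
    rw [Nat.sub_add_cancel hm]
    exact mul_rpow_div_two_pow_le hR0 hextra
  have hex : ∃ n, lam * (R0 / 2 ^ (n + 1)) ^ (θ - 1) ≤ 2 * a := ⟨m - 1, hlast⟩
  set n := Nat.find hex
  have hnm : n < m := by have := Nat.find_min' hex hlast; omega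
  have hloc : ‖what n - wstar‖ ≤ R0 / 2 ^ n :=
    norm_sub_le_div_two_pow_of_phases (by linarith) hlam hR0 hTNC h0 hphase hnm.le
      fun k hk => (not_le.mp (Nat.find_min hex hk)).le
  have hgap : F (what m) - F wstar ≤ 2 * (R0 / 2 ^ n - R0 / 2 ^ m) * a :=
    le_two_mul_sub_of_geometric_increments (e := fun k => F (what k) - F wstar) hnm
      (hphase n hnm hloc) fun k _ hkm => by
        have := hii (k + 1) (by omega) hkm
        simp only [Nat.add_sub_cancel] at this
        linarith
  have hrate := mul_le_rpow_of_mul_rpow_le hθ hlam (by positivity) (by positivity)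
    (Nat.find_spec hex)
  calc F (what m) - F wstar ≤ 2 * (R0 / 2 ^ n - R0 / 2 ^ m) * a := hgap
    _ ≤ 2 * (R0 / 2 ^ (n + 1) * (2 * a)) := by
      have : 0 ≤ R0 / 2 ^ m * a := by positivity
      rw [pow_succ, div_mul_eq_div_div]
      linarith
    _ ≤ 2 * ((1 / lam) ^ (1 / (θ - 1)) * (2 * a) ^ (θ / (θ - 1))) := by gcongr
    _ ≤ 4 * (1 / lam) ^ (1 / (θ - 1)) * (2 * a) ^ (θ / (θ - 1)) := by
      linarith [show 0 ≤ (1 / lam) ^ (1 / (θ - 1)) * (2 * a) ^ (θ / (θ - 1)) by positivity]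

/-- Fast excess-risk rate of the localized multi-phase method under the
(θ, λ)-TNC: if additionally λ ≤ 2^{(θ−1)m+1}·R₀^{1−θ}·a, then
F(ŵ_m) − F(w*) ≤ 4·(1/λ)^{1/(θ−1)}·(2a)^{θ/(θ−1)}. -/
theorem localized_phases_rate {H : Type*} [NormedAddCommGroup H] [NormedSpace ℝ H]
    (θ lam a R0 : ℝ) (hθ : 1 < θ) (hlam : 0 < lam) (ha : 0 < a) (hR0 : 0 < R0)
    (m : ℕ) (hm : 1 ≤ m)
    (F : H → ℝ) (wstar : H)
    (hTNC : ∀ w : H, F w - F wstar ≥ lam * ‖w - wstar‖ ^ θ)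
    (what : ℕ → H) (h0 : ‖what 0 - wstar‖ ≤ R0)
    (hi : ∀ k, 1 ≤ k → k ≤ m → ‖what (k - 1) - wstar‖ ≤ R0 / (2 : ℝ) ^ (k - 1) →
      F (what k) - F wstar ≤ R0 / (2 : ℝ) ^ (k - 1) * a)
    (hii : ∀ k, 1 ≤ k → k ≤ m →
      F (what k) - F (what (k - 1)) ≤ R0 / (2 : ℝ) ^ (k - 1) * a)
    (hextra : lam ≤ 2 ^ ((θ - 1) * (m : ℝ) + 1) * R0 ^ (1 - θ) * a) :
    F (what m) - F wstar ≤
      4 * (1 / lam) ^ (1 / (θ - 1)) * (2 * a) ^ (θ / (θ - 1)) :=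
  localized_phases_rate_general θ lam a R0 hθ hlam ha hR0 m hm F wstar hTNC what h0 hi hii hextra
end
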